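/- arXiv:1104.4870 — 4 statements merged into one kernel-verified Lean document; each statement's English description precedes it below -/
import Mathlib

section
/- For a composition ν of n, there exists a bijection Φ from the set of words of weight ν to itself such that inv(Φ(w)) = maj(w) for every word w of weight ν. -/
open Finset

/-- The canonical word of weight `ν`: `ν.get 0` letters `1`, then `ν.get 1` letters `2`, etc. -/
def canonicalWord (ν : List ℕ) : List ℕ :=
  (List.range ν.length).flatMap fun i => List.replicate (ν.getD i 0) (i + 1)

/-- The (finite) set of all words of weight `ν`, i.e. all rearrangements of the
canonical word of weight `ν`. -/
def WordSet (ν : List ℕ) : Finset (List ℕ) :=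
  (canonicalWord ν).permutations.toFinset

/-- The number of inversions of a word: pairs of positions `i < j` with `w i > w j`. -/
def invL : List ℕ → ℕ
  | [] => 0
  | a :: l => (l.countP fun b => decide (b < a)) + invL l

/-- The major index of a word: the sum of the (1-based) positions `i` with `w_i > w_{i+1}`. -/
def majL (w : List ℕ) : ℕ :=
  ∑ i ∈ Finset.range w.length,
    if w.getD (i + 1) 0 < w.getD i 0 ∧ i + 1 < w.length then i + 1 else 0

/-!
Foata's second fundamental transformation: `Φ (w ++ [a]) = γ_a (Φ w) ++ [a]`, where `γ_a v` cuts
`v` after every letter lying on the same side of `a` as the last letter of `v` (which is also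
the last letter of `w`) and moves the last letter of each block to its front. Appending `a`
adds one inversion per letter `> a`. If the last letter is `≤ a`, each block `x₁ ⋯ xₖ y` has
`y ≤ a < xᵢ`, so `γ_a` removes one inversion per letter `> a`: `inv` and `maj` are unchanged.
Otherwise `γ_a` adds one inversion per letter `≤ a`, so `inv` grows by `|w|`, matching the new
descent of `maj` at position `|w|`. The first letter of `γ_a v` lies on the same side of `a` as
the last letter of `v`, so the cuts, and hence `v`, can be recovered: `Φ` is injective on each
finite rearrangement class.
-/

section CycleBlocks

variable {α : Type*} (p : α → Bool)

/-- On a list whose last letter satisfies `p`: cut it after each letter satisfying `p` and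
rotate every block `x₁ ⋯ xₖ y` to `y x₁ ⋯ xₖ`. -/
def cycleBlocks : List α → List α
  | [] => []
  | x :: xs =>
    if p x then x :: cycleBlocks xs
    else
      match cycleBlocks xs with
      | [] => [x]
      | y :: t => y :: x :: t

def uncycleBlocks : List α → List α
  | y :: x :: t => if p x then y :: uncycleBlocks (x :: t) else x :: uncycleBlocks (y :: t)
  | l => l
termination_by l => l.length

variable {p}

theorem cycleBlocks_cons_of_pos {x : α} (hx : p x) (xs : List α) :
    cycleBlocks p (x :: xs) = x :: cycleBlocks p xs := by
  simp [cycleBlocks, hx]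

theorem cycleBlocks_cons_of_neg {x : α} (hx : ¬p x) {xs : List α} {y : α} {t : List α}
    (h : cycleBlocks p xs = y :: t) : cycleBlocks p (x :: xs) = y :: x :: t := by
  simp [cycleBlocks, hx, h]

theorem cycleBlocks_perm : ∀ l : List α, (cycleBlocks p l).Perm l
  | [] => .nil
  | x :: xs => by
    have ih := cycleBlocks_perm xs
    by_cases hx : p x
    · rw [cycleBlocks_cons_of_pos hx]
      exact ih.cons x
    · rcases h : cycleBlocks p xs with _ | ⟨y, t⟩
      · rw [h, List.nil_perm] at ih
        simp [cycleBlocks, hx, ih]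
      · rw [cycleBlocks_cons_of_neg hx h]
        rw [h] at ih
        exact (List.Perm.swap x y t).trans (ih.cons x)

theorem forall_getLast?_of_cons {x : α} {xs : List α} (h : ∀ y ∈ (x :: xs).getLast?, p y) :
    ∀ y ∈ xs.getLast?, p y := by
  cases xs with
  | nil => simp
  | cons z zs => rwa [List.getLast?_cons_cons] at h

theorem ne_nil_of_forall_getLast?_cons {x : α} {xs : List α}
    (h : ∀ y ∈ (x :: xs).getLast?, p y) (hx : ¬p x) : xs ≠ [] := by
  rintro rfl
  exact hx (h x rfl)

theorem forall_getLast?_of_getLastD {l : List α} {d : α} (h : p (l.getLastD d)) :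
    ∀ y ∈ l.getLast?, p y := by
  intro y hy
  rwa [List.getLastD_eq_getLast?, Option.mem_def.1 hy] at h

theorem exists_cycleBlocks_eq_cons :
    ∀ {l : List α}, (∀ y ∈ l.getLast?, p y) → l ≠ [] →
      ∃ y t, cycleBlocks p l = y :: t ∧ p y
  | [], _, hne => absurd rfl hne
  | x :: xs, hl, _ => by
    by_cases hx : p x
    · exact ⟨x, _, cycleBlocks_cons_of_pos hx xs, hx⟩
    · obtain ⟨y, t, h, hy⟩ :=
        exists_cycleBlocks_eq_cons (forall_getLast?_of_cons hl)
          (ne_nil_of_forall_getLast?_cons hl hx)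
      exact ⟨y, x :: t, cycleBlocks_cons_of_neg hx h, hy⟩

theorem uncycleBlocks_cycleBlocks :
    ∀ {l : List α}, (∀ y ∈ l.getLast?, p y) → uncycleBlocks p (cycleBlocks p l) = l
  | [], _ => by simp [cycleBlocks, uncycleBlocks]
  | x :: xs, hl => by
    have ih := uncycleBlocks_cycleBlocks (forall_getLast?_of_cons hl)
    by_cases hx : p x
    · rw [cycleBlocks_cons_of_pos hx]
      rcases eq_or_ne xs [] with rfl | hxs
      · simp [cycleBlocks, uncycleBlocks]
      obtain ⟨y, t, h, hy⟩ := exists_cycleBlocks_eq_cons (forall_getLast?_of_cons hl) hxs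
      rw [h] at ih ⊢
      rw [uncycleBlocks, if_pos hy, ih]
    · obtain ⟨y, t, h, -⟩ :=
        exists_cycleBlocks_eq_cons (forall_getLast?_of_cons hl)
          (ne_nil_of_forall_getLast?_cons hl hx)
      rw [cycleBlocks_cons_of_neg hx h, uncycleBlocks, if_neg hx, ← h, ih]

theorem cycleBlocks_injOn : Set.InjOn (cycleBlocks p) {l | ∀ y ∈ l.getLast?, p y} :=
  Set.LeftInvOn.injOn (f₁' := uncycleBlocks p) fun _ hl => uncycleBlocks_cycleBlocks hl

end CycleBlocks

theorem invL_cons (a : ℕ) (l : List ℕ) :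
    invL (a :: l) = (l.countP fun b => decide (b < a)) + invL l := rfl

theorem invL_cons_cons_of_lt {x y : ℕ} (h : x < y) (t : List ℕ) :
    invL (y :: x :: t) = invL (x :: y :: t) + 1 := by
  simp only [invL_cons, List.countP_cons]
  simp [h, h.not_gt]
  omega

theorem invL_append_singleton (l : List ℕ) (a : ℕ) :
    invL (l ++ [a]) = invL l + l.countP fun b => decide (a < b) := by
  induction l with
  | nil => rfl
  | cons x l ih =>
    simp only [List.cons_append, invL_cons, ih, List.countP_append, List.countP_cons]
    by_cases h : a < x <;> simp [h] <;> omega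

theorem invL_cycleBlocks_add_countP {p : ℕ → Bool}
    (hp : ∀ x y, p x = false → p y = true → y < x) :
    ∀ {l : List ℕ}, (∀ y ∈ l.getLast?, p y) →
      invL (cycleBlocks p l) + l.countP (fun x => !p x) = invL l
  | [], _ => rfl
  | x :: xs, hl => by
    have ih := invL_cycleBlocks_add_countP hp (forall_getLast?_of_cons hl)
    have hperm := cycleBlocks_perm (p := p) xs
    by_cases hx : p x
    · rw [cycleBlocks_cons_of_pos hx, invL_cons, invL_cons, hperm.countP_eq, List.countP_cons]
      simp [hx]
      omega
    · obtain ⟨y, t, h, hy⟩ :=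
        exists_cycleBlocks_eq_cons (forall_getLast?_of_cons hl)
          (ne_nil_of_forall_getLast?_cons hl hx)
      have hswap := invL_cons_cons_of_lt (hp x y (by simpa using hx) hy) t
      rw [h] at ih hperm
      rw [cycleBlocks_cons_of_neg hx h, invL_cons x, ← hperm.countP_eq, ← ih, List.countP_cons]
      rw [invL_cons x] at hswap
      simp [hx]
      omega

theorem invL_cycleBlocks {p : ℕ → Bool} (hp : ∀ x y, p x = false → p y = true → x < y) :
    ∀ {l : List ℕ}, (∀ y ∈ l.getLast?, p y) →
      invL (cycleBlocks p l) = invL l + l.countP (fun x => !p x)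
  | [], _ => rfl
  | x :: xs, hl => by
    have ih := invL_cycleBlocks hp (forall_getLast?_of_cons hl)
    have hperm := cycleBlocks_perm (p := p) xs
    by_cases hx : p x
    · rw [cycleBlocks_cons_of_pos hx, invL_cons, invL_cons, hperm.countP_eq, List.countP_cons]
      simp [hx]
      omega
    · obtain ⟨y, t, h, hy⟩ :=
        exists_cycleBlocks_eq_cons (forall_getLast?_of_cons hl)
          (ne_nil_of_forall_getLast?_cons hl hx)
      have hswap := invL_cons_cons_of_lt (hp x y (by simpa using hx) hy) t
      rw [h] at ih hperm
      rw [cycleBlocks_cons_of_neg hx h, hswap, invL_cons x, invL_cons x, ← hperm.countP_eq, ih,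
        List.countP_cons]
      simp [hx]
      omega

theorem majL_append_singleton (u : List ℕ) (a : ℕ) :
    majL (u ++ [a]) = majL u + if a < u.getLastD 0 then u.length else 0 := by
  rcases List.eq_nil_or_concat u with rfl | ⟨u, b, rfl⟩
  · simp [majL]
  simp only [List.concat_eq_append, majL, List.length_append, List.length_singleton,
    Finset.sum_range_succ, List.getLastD_concat]
  have hsum : ∀ i ∈ Finset.range u.length,
      (if (u ++ [b] ++ [a]).getD (i + 1) 0 < (u ++ [b] ++ [a]).getD i 0 ∧ i + 1 < u.length + 1 + 1
        then i + 1 else 0) =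
      if (u ++ [b]).getD (i + 1) 0 < (u ++ [b]).getD i 0 ∧ i + 1 < u.length + 1
        then i + 1 else 0 := by
    intro i hi
    have hi := Finset.mem_range.1 hi
    rw [List.getD_append _ _ _ i (by simp; omega), List.getD_append _ _ _ (i + 1) (by simp; omega)]
    simp [show i + 1 < u.length + 1 by omega, hi.le]
  rw [Finset.sum_congr rfl hsum]
  simp [List.getD_eq_getElem?_getD]

def sameSide (a c b : ℕ) : Bool :=
  decide (b ≤ a ↔ c ≤ a)

theorem sameSide_of_le {a c : ℕ} (h : c ≤ a) : sameSide a c = fun b => decide (b ≤ a) := by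
  funext b
  simp [sameSide, h]

theorem sameSide_of_lt {a c : ℕ} (h : a < c) : sameSide a c = fun b => decide (a < b) := by
  funext b
  simp [sameSide, h.not_ge]

theorem sameSide_eq_of_sameSide {a c c' b : ℕ} (h : sameSide a c b) (h' : sameSide a c' b) :
    sameSide a c = sameSide a c' := by
  funext x
  simp only [sameSide, decide_eq_true_eq] at h h' ⊢
  simp only [← h, h']

def foataStep (a : ℕ) (v : List ℕ) : List ℕ :=
  cycleBlocks (sameSide a (v.getLastD 0)) v

theorem foataStep_perm (a : ℕ) (v : List ℕ) : (foataStep a v).Perm v :=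
  cycleBlocks_perm v

theorem forall_getLast?_sameSide (a : ℕ) (v : List ℕ) :
    ∀ y ∈ v.getLast?, sameSide a (v.getLastD 0) y :=
  forall_getLast?_of_getLastD (d := 0) (by simp [sameSide])

theorem invL_foataStep_append (a : ℕ) (v : List ℕ) :
    invL (foataStep a v ++ [a]) = invL v + if a < v.getLastD 0 then v.length else 0 := by
  rw [invL_append_singleton, (foataStep_perm a v).countP_eq]
  have hlen :
      v.countP (fun b => decide (b ≤ a)) + v.countP (fun b => decide (a < b)) = v.length := by
    simpa using (v.length_eq_countP_add_countP fun b => decide (b ≤ a)).symm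
  have hlast := forall_getLast?_sameSide a v
  rw [foataStep]
  by_cases hle : v.getLastD 0 ≤ a
  · rw [sameSide_of_le hle] at hlast ⊢
    have := invL_cycleBlocks_add_countP (fun x y hx hy => by simp at hx hy; omega) hlast
    simp only [← decide_not, not_le] at this
    rw [if_neg (by omega)]
    omega
  · rw [sameSide_of_lt (not_le.1 hle)] at hlast ⊢
    have := invL_cycleBlocks (fun x y hx hy => by simp at hx hy; omega) hlast
    simp only [← decide_not, not_lt] at this
    rw [if_pos (by omega)]
    omega

theorem foataStep_eq_nil_iff {a : ℕ} {v : List ℕ} : foataStep a v = [] ↔ v = [] := by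
  rw [← List.length_eq_zero_iff, (foataStep_perm a v).length_eq, List.length_eq_zero_iff]

theorem foataStep_injective (a : ℕ) : Function.Injective (foataStep a) := by
  intro v v' h
  rcases eq_or_ne v [] with rfl | hv
  · exact (foataStep_eq_nil_iff.1 (h.symm.trans (foataStep_eq_nil_iff.2 rfl))).symm
  have hv' : v' ≠ [] := fun hv' =>
    hv (foataStep_eq_nil_iff.1 (h.trans (foataStep_eq_nil_iff.2 hv')))
  obtain ⟨y, t, hyt, hy⟩ := exists_cycleBlocks_eq_cons (forall_getLast?_sameSide a v) hv
  obtain ⟨y', t', hyt', hy'⟩ := exists_cycleBlocks_eq_cons (forall_getLast?_sameSide a v') hv'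
  obtain rfl : y = y' := List.head_eq_of_cons_eq (hyt.symm.trans (h.trans hyt'))
  have hp := sameSide_eq_of_sameSide hy hy'
  have hlast := forall_getLast?_sameSide a v
  rw [hp] at hlast
  rw [foataStep, foataStep, hp] at h
  exact cycleBlocks_injOn hlast (forall_getLast?_sameSide a v') h

def foata (w : List ℕ) : List ℕ :=
  w.foldl (fun v a => foataStep a v ++ [a]) []

theorem foata_append_singleton (w : List ℕ) (a : ℕ) :
    foata (w ++ [a]) = foataStep a (foata w) ++ [a] :=
  List.foldl_concat ..

theorem foata_perm (w : List ℕ) : (foata w).Perm w := by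
  induction w using List.reverseRecOn with
  | nil => rfl
  | append_singleton w a ih =>
    rw [foata_append_singleton]
    exact ((foataStep_perm a _).trans ih).append_right [a]

theorem getLastD_foata (w : List ℕ) : (foata w).getLastD 0 = w.getLastD 0 := by
  rcases List.eq_nil_or_concat w with rfl | ⟨w, a, rfl⟩
  · rfl
  · simp [foata_append_singleton]

theorem invL_foata (w : List ℕ) : invL (foata w) = majL w := by
  induction w using List.reverseRecOn with
  | nil => rfl
  | append_singleton w a ih =>
    rw [foata_append_singleton, invL_foataStep_append, majL_append_singleton, ih,
      getLastD_foata, (foata_perm w).length_eq]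

theorem foata_injective : Function.Injective foata := by
  intro w
  induction w using List.reverseRecOn with
  | nil =>
    intro w' h
    have := foata_perm w'
    rw [← h] at this
    exact this.nil_eq
  | append_singleton w a ih =>
    intro w' h
    rcases List.eq_nil_or_concat w' with rfl | ⟨w', a', rfl⟩
    · rw [foata_append_singleton] at h
      exact absurd h (by simp [foata])
    rw [List.concat_eq_append, foata_append_singleton, foata_append_singleton] at h
    obtain ⟨hstep, ha⟩ := List.append_inj' h rfl
    obtain rfl : a = a' := List.singleton_inj.1 ha
    rw [ih (foataStep_injective a hstep), List.concat_eq_append]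

theorem mem_WordSet_iff {ν w : List ℕ} : w ∈ WordSet ν ↔ w.Perm (canonicalWord ν) := by
  simp [WordSet, List.mem_permutations]

/-- Foata's bijection: for any composition `ν`, there is a bijection `Φ` of the set of
words of weight `ν` with itself such that `inv (Φ w) = maj w` for all `w`. -/
theorem stmt1 (ν : List ℕ) :
    ∃ Φ : {w // w ∈ WordSet ν} ≃ {w // w ∈ WordSet ν},
      ∀ w : {w // w ∈ WordSet ν}, invL (Φ w : List ℕ) = majL (w : List ℕ) := by
  let Φ : {w // w ∈ WordSet ν} → {w // w ∈ WordSet ν} := fun w =>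
    ⟨foata w, mem_WordSet_iff.2 ((foata_perm w).trans (mem_WordSet_iff.1 w.2))⟩
  have hΦ : Function.Injective Φ := fun _ _ h =>
    Subtype.ext (foata_injective (congrArg Subtype.val h))
  exact ⟨Equiv.ofBijective Φ hΦ.bijective_of_finite, fun w => invL_foata w⟩
end

section
/- For any composition ν = (ν_1,...,ν_m) of n and any integers k_1,...,k_m, there exists a function h: Word(ν) → ℤ such that q^{k_1ν_1 + ··· + k_mν_m} [n choose ν]_q = Σ_{w ∈ Word(ν)} q^{n·h(w) + inv(w)}. -/
open Finset

/-- The `q`-integer `[k]_q = 1 + q + ⋯ + q^{k-1}` as a rational function in `q = X`. -/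
noncomputable def qInt (k : ℕ) : RatFunc ℚ := ∑ i ∈ Finset.range k, RatFunc.X ^ i

/-- The `q`-factorial `[k]_q!`. -/
noncomputable def qFact (k : ℕ) : RatFunc ℚ := ∏ i ∈ Finset.range k, qInt (i + 1)

/-- The `q`-multinomial coefficient `[n choose ν]_q = [n]_q! / ([ν₁]_q! [ν₂]_q! ⋯)`
where `n = ν₁ + ν₂ + ⋯`. -/
noncomputable def qMultinomial (ν : List ℕ) : RatFunc ℚ :=
  qFact ν.sum / (ν.map qFact).prod

/-!
MacMahon's identity `∑_{w ~ c} q^{inv w} · ∏_a [m_a]_q! = [n]_q!` (where `m_a` is the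
multiplicity of the letter `a` in `c` and `n = |c|`) follows by removing the first letter of `w`,
and holds for any `q` in any commutative semiring. Comparing it for `c` and for `c` with one
letter `a` removed gives `[m_a]_q · F(c) = [n]_q · F(c ∖ a)` for `F(c) = ∑_{w ~ c} q^{inv w}`.
Multiplying by `q - 1` and evaluating at `q = [1]` in the group ring of `ℤ/n`, where `q^n = 1`,
shows that the distribution of `inv` modulo `n` is invariant under translation by every `m_a`,
hence by `K = k₁ν₁ + ⋯ + k_mν_m`. Reindexing by a permutation `σ` of `Word(ν)` that carries
each residue class onto its translate by `-K`, every `K + inv(σ w)` is `inv(w) + n·h(w)`.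
-/

section QAnalog

variable {R : Type*} [CommSemiring R] (q : R)

def qIntAt (k : ℕ) : R := ∑ i ∈ range k, q ^ i

def qFactAt (k : ℕ) : R := ∏ i ∈ range k, qIntAt q (i + 1)

lemma qIntAt_add (a b : ℕ) : qIntAt q (a + b) = qIntAt q a + q ^ a * qIntAt q b := by
  simp only [qIntAt, sum_range_add, mul_sum, pow_add]

lemma qFactAt_succ (k : ℕ) : qFactAt q (k + 1) = qFactAt q k * qIntAt q (k + 1) :=
  prod_range_succ _ _

lemma sum_pow_sum_lt_mul_qIntAt {α : Type*} [LinearOrder α] (s : Finset α) (m : α → ℕ) :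
    ∑ a ∈ s, q ^ (∑ b ∈ s with b < a, m b) * qIntAt q (m a) = qIntAt q (∑ a ∈ s, m a) := by
  induction s using Finset.induction_on_max with
  | empty => simp [qIntAt]
  | insert a s hlt ih =>
    have ha : a ∉ s := fun h => (hlt a h).false
    have hfilter_a : (insert a s).filter (· < a) = s := by
      rw [filter_insert, if_neg (lt_irrefl a), filter_true_of_mem hlt]
    have hfilter_s : ∀ x ∈ s, (insert a s).filter (· < x) = s.filter (· < x) := fun x hx => by
      rw [filter_insert, if_neg (hlt x hx).not_gt]
    have hrest : ∑ x ∈ s, q ^ (∑ b ∈ insert a s with b < x, m b) * qIntAt q (m x)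
        = qIntAt q (∑ x ∈ s, m x) := by
      rw [← ih]
      exact sum_congr rfl fun x hx => by rw [hfilter_s x hx]
    rw [sum_insert ha, sum_insert ha, hfilter_a, hrest, add_comm (m a), qIntAt_add]
    ring

lemma RingHom.map_qIntAt {S : Type*} [CommSemiring S] (φ : R →+* S) (k : ℕ) :
    φ (qIntAt q k) = qIntAt (φ q) k := by
  simp [qIntAt]

lemma RingHom.map_qFactAt {S : Type*} [CommSemiring S] (φ : R →+* S) (k : ℕ) :
    φ (qFactAt q k) = qFactAt (φ q) k := by
  simp [qFactAt, RingHom.map_qIntAt]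

end QAnalog

lemma qFactAt_X_ne_zero {R : Type*} [CommSemiring R] [NoZeroDivisors R] [CharZero R] (k : ℕ) :
    qFactAt (Polynomial.X : Polynomial R) k ≠ 0 :=
  prod_ne_zero_iff.mpr fun i _ h => Nat.cast_add_one_ne_zero (R := R) i <| by
    simpa [qIntAt, Polynomial.eval_finsetSum] using congrArg (Polynomial.eval 1) h

lemma qFactAt_ratFuncX_ne_zero {K : Type*} [Field K] [CharZero K] (k : ℕ) :
    qFactAt (RatFunc.X : RatFunc K) k ≠ 0 := by
  rw [← RatFunc.algebraMap_X, ← RingHom.map_qFactAt]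
  exact (map_ne_zero_iff _ (RatFunc.algebraMap_injective K)).mpr (qFactAt_X_ne_zero (R := K) k)

section InversionSum

variable {R : Type*} [CommSemiring R] (q : R)

def invSum (c : List ℕ) : R := ∑ w ∈ c.permutations.toFinset, q ^ invL w

lemma permutations_toFinset_eq_biUnion {c : List ℕ} (hc : c ≠ []) :
    c.permutations.toFinset =
      c.toFinset.biUnion fun a => (c.erase a).permutations.toFinset.image (a :: ·) := by
  ext w
  cases w with
  | nil => simpa [List.mem_permutations, eq_comm] using hc
  | cons b u => simp [List.mem_permutations, List.cons_perm_iff_perm_erase, and_comm]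

lemma invSum_eq_sum_erase {c : List ℕ} (hc : c ≠ []) :
    invSum q c = ∑ a ∈ c.toFinset, q ^ c.countP (· < a) * invSum q (c.erase a) := by
  rw [invSum, permutations_toFinset_eq_biUnion hc, sum_biUnion]
  · refine sum_congr rfl fun a _ => ?_
    rw [sum_image fun _ _ _ _ h => List.cons_injective h, invSum, mul_sum]
    refine sum_congr rfl fun u hu => ?_
    have hcount : u.countP (· < a) = c.countP (· < a) := by
      rw [(List.mem_permutations.mp (List.mem_toFinset.mp hu)).countP_eq, List.countP_erase]
      simp
    rw [invL, pow_add, hcount]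
  · intro a _ b _ hab
    simp only [Function.onFun, disjoint_left, mem_image]
    rintro _ ⟨u, _, rfl⟩ ⟨v, _, h⟩
    exact hab (List.cons_eq_cons.mp h).1.symm

lemma prod_qFactAt_count_erase {c : List ℕ} {a : ℕ} (ha : a ∈ c) {s : Finset ℕ} (hs : a ∈ s) :
    ∏ b ∈ s, qFactAt q (c.count b)
      = qIntAt q (c.count a) * ∏ b ∈ s, qFactAt q ((c.erase a).count b) := by
  obtain ⟨k, hk⟩ := Nat.exists_eq_add_one.mpr (List.count_pos_iff.mpr ha)
  have hrest : ∏ b ∈ s.erase a, qFactAt q ((c.erase a).count b)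
      = ∏ b ∈ s.erase a, qFactAt q (c.count b) :=
    prod_congr rfl fun b hb => by rw [List.count_erase_of_ne (ne_of_mem_erase hb)]
  rw [← mul_prod_erase s _ hs, ← mul_prod_erase s _ hs, hrest, List.count_erase_self, hk,
    Nat.add_sub_cancel, qFactAt_succ]
  ring

theorem invSum_mul_prod_qFactAt_count (c : List ℕ) {s : Finset ℕ} (hs : ∀ a ∈ c, a ∈ s) :
    invSum q c * ∏ a ∈ s, qFactAt q (c.count a) = qFactAt q c.length := by
  induction hn : c.length generalizing c with
  | zero =>
    obtain rfl := List.length_eq_zero_iff.mp hn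
    simp [invSum, invL, qFactAt]
  | succ n ih =>
    have hc : c ≠ [] := List.ne_nil_of_length_eq_add_one hn
    have herase : ∀ a ∈ c.toFinset,
        q ^ c.countP (· < a) * invSum q (c.erase a) * ∏ b ∈ s, qFactAt q (c.count b)
          = q ^ (∑ b ∈ c.toFinset with b < a, c.count b) * qIntAt q (c.count a)
              * qFactAt q n := by
      intro a ha
      have ha : a ∈ c := List.mem_toFinset.mp ha
      rw [prod_qFactAt_count_erase q ha (hs a ha), ← sum_filter_count_eq_countP,
        ← ih (c.erase a) (fun b hb => hs b (List.mem_of_mem_erase hb))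
          (by rw [List.length_erase_of_mem ha, hn]; rfl)]
      ring
    rw [invSum_eq_sum_erase q hc, sum_mul, sum_congr rfl herase, ← sum_mul,
      sum_pow_sum_lt_mul_qIntAt, List.sum_toFinset_count_eq_length, hn, qFactAt_succ, mul_comm]

lemma RingHom.map_invSum {S : Type*} [CommSemiring S] (φ : R →+* S) (c : List ℕ) :
    φ (invSum q c) = invSum (φ q) c := by
  simp [invSum]

lemma qIntAt_count_mul_invSum {c : List ℕ} {a : ℕ} (ha : a ∈ c) :
    qIntAt q (c.count a) * invSum q c = qIntAt q c.length * invSum q (c.erase a) := by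
  have hX : qIntAt (Polynomial.X : Polynomial ℕ) (c.count a) * invSum Polynomial.X c
      = qIntAt Polynomial.X c.length * invSum Polynomial.X (c.erase a) := by
    set X : Polynomial ℕ := Polynomial.X
    obtain ⟨n, hn⟩ := Nat.exists_eq_add_one.mpr (List.length_pos_of_mem ha)
    have hsub : ∀ b ∈ c, b ∈ c.toFinset := fun b hb => List.mem_toFinset.mpr hb
    have hc := invSum_mul_prod_qFactAt_count X c hsub
    have hca := invSum_mul_prod_qFactAt_count X (c.erase a)
      fun b hb => hsub b (List.mem_of_mem_erase hb)
    rw [prod_qFactAt_count_erase X ha (hsub a ha), hn, qFactAt_succ] at hc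
    rw [List.length_erase_of_mem ha, hn, Nat.add_sub_cancel] at hca
    have hD : ∏ b ∈ c.toFinset, qFactAt X ((c.erase a).count b) ≠ 0 :=
      prod_ne_zero_iff.mpr fun b _ => qFactAt_X_ne_zero _
    refine mul_right_cancel₀ hD ?_
    calc qIntAt X (c.count a) * invSum X c * ∏ b ∈ c.toFinset, qFactAt X ((c.erase a).count b)
        = qFactAt X n * qIntAt X (n + 1) := by rw [← hc]; ring
      _ = _ := by rw [← hca, hn]; ring
  have := congrArg (Polynomial.eval₂RingHom (Nat.castRingHom R) q) hX
  rwa [map_mul, map_mul, RingHom.map_invSum, RingHom.map_invSum, RingHom.map_qIntAt,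
    RingHom.map_qIntAt, Polynomial.coe_eval₂RingHom, Polynomial.eval₂_X] at this

end InversionSum

lemma AddMonoidAlgebra.coeff_sum_single_one {ι G : Type*} [DecidableEq G] (s : Finset ι)
    (g : ι → G) (r : G) :
    (∑ i ∈ s, AddMonoidAlgebra.single (g i) (1 : ℤ)).coeff r = #{i ∈ s | g i = r} := by
  simp [AddMonoidAlgebra.coeff_sum, Finsupp.single_apply]

lemma periodic_card_filter_invL {c : List ℕ} {n : ℕ} (hn : c.length = n) {a : ℕ} (ha : a ∈ c) :
    Function.Periodic
      (fun r : ZMod n => #{w ∈ c.permutations.toFinset | (invL w : ZMod n) = r}) (c.count a) := by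
  subst hn
  set n := c.length
  set q : AddMonoidAlgebra ℤ (ZMod n) := AddMonoidAlgebra.single 1 1
  have hpow (m : ℕ) : q ^ m = AddMonoidAlgebra.single (m : ZMod n) 1 := by
    simp [q, AddMonoidAlgebra.single_pow]
  have hfix : q ^ c.count a * invSum q c = invSum q c := by
    have h := congrArg (· * (q - 1)) (qIntAt_count_mul_invSum q ha)
    simp only [mul_right_comm _ _ (q - 1), qIntAt, geom_sum_mul] at h
    rwa [hpow n, ZMod.natCast_self, ← AddMonoidAlgebra.one_def, sub_self, zero_mul, sub_mul,
      one_mul, sub_eq_zero] at h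
  have hsum : invSum q c
      = ∑ w ∈ c.permutations.toFinset, AddMonoidAlgebra.single (invL w : ZMod n) 1 := by
    simp [invSum, hpow]
  intro r
  have h := congrArg (fun f => f.coeff (r + c.count a)) hfix
  simp only [hsum, mul_sum, hpow, AddMonoidAlgebra.single_mul_single, one_mul,
    AddMonoidAlgebra.coeff_sum_single_one] at h
  simp only [add_comm (c.count a : ZMod n), add_left_inj, Nat.cast_inj] at h
  exact h.symm

lemma Nat.card_subtype_finset_eq_card_filter {α : Type*} (s : Finset α) (p : α → Prop)
    [DecidablePred p] : Nat.card {x : s // p x} = #{x ∈ s | p x} := by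
  rw [← Nat.card_eq_finsetCard]
  exact Nat.card_congr <| (Equiv.subtypeSubtypeEquivSubtypeInter (· ∈ s) p).trans <|
    Equiv.subtypeEquivRight fun x => by simp

lemma exists_sum_add_eq_sum_mul_add {α M : Type*} [AddCommMonoid M] (s : Finset α) (f : α → ℤ)
    (n : ℕ) (K : ℤ) (hK : Function.Periodic (fun r : ZMod n => #{x ∈ s | (f x : ZMod n) = r}) K)
    (F : ℤ → M) : ∃ h : α → ℤ, ∑ x ∈ s, F (K + f x) = ∑ x ∈ s, F (n * h x + f x) := by
  classical
  set g : s → ZMod n := fun x => (f x : ZMod n)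
  have hcard (r : ZMod n) : Nat.card {x : s // g x - K = r} = Nat.card {x : s // g x = r} := by
    calc Nat.card {x : s // g x - K = r} = Nat.card {x : s // g x = r + K} :=
          Nat.card_congr (Equiv.subtypeEquivRight fun x => sub_eq_iff_eq_add)
      _ = Nat.card {x : s // g x = r} :=
          (Nat.card_subtype_finset_eq_card_filter s _).trans
            ((hK r).trans (Nat.card_subtype_finset_eq_card_filter s _).symm)
  let σ : s ≃ s := Equiv.ofFiberEquiv fun r => (Finite.card_eq.mp (hcard r)).some
  have hσ (x : s) : (f (σ x) : ZMod n) = f x - K :=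
    Equiv.ofFiberEquiv_map (g := g) (f := fun x => g x - K) _ x
  refine ⟨fun x => if hx : x ∈ s then (K + f (σ ⟨x, hx⟩) - f x) / n else 0, ?_⟩
  rw [← sum_coe_sort s, ← sum_coe_sort s, ← Equiv.sum_comp σ (fun x => F (K + f x))]
  refine sum_congr rfl fun x _ => congrArg F ?_
  have hdvd : (n : ℤ) ∣ K + f (σ x) - f x := by
    rw [← ZMod.intCast_zmod_eq_zero_iff_dvd]
    push_cast
    rw [hσ x]
    ring
  simp only [dif_pos x.2, Int.mul_ediv_cancel' hdvd]
  ring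

lemma Finset.sum_range_eq_sum_map_range {M : Type*} [AddCommMonoid M] (f : ℕ → M) (n : ℕ) :
    ∑ i ∈ range n, f i = ((List.range n).map f).sum := by
  rw [sum_eq_multiset_sum]
  rfl

lemma List.map_getD_range (ν : List ℕ) : (List.range ν.length).map (ν.getD · 0) = ν := by
  refine List.ext_getElem (by simp) fun i _ hi => ?_
  simp [hi]

lemma canonicalWord_length (ν : List ℕ) : (canonicalWord ν).length = ν.sum := by
  simp only [canonicalWord, List.length_flatMap, List.length_replicate]
  rw [List.map_getD_range]

lemma count_succ_canonicalWord (ν : List ℕ) (i : ℕ) :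
    (canonicalWord ν).count (i + 1) = ν.getD i 0 := by
  rw [canonicalWord, List.count_flatMap, ← sum_range_eq_sum_map_range]
  simp only [Function.comp_apply, List.count_replicate, beq_iff_eq, add_left_inj]
  rw [sum_ite_eq']
  split_ifs with hi
  · rfl
  · rw [List.getD_eq_default _ _ (not_lt.mp (mem_range.not.mp hi))]

lemma mem_image_range_of_mem_canonicalWord {ν : List ℕ} {a : ℕ} (ha : a ∈ canonicalWord ν) :
    a ∈ (range ν.length).image (· + 1) := by
  simp only [canonicalWord, List.mem_flatMap, List.mem_range, List.mem_replicate] at ha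
  obtain ⟨i, hi, -, rfl⟩ := ha
  exact mem_image_of_mem _ (mem_range.mpr hi)

lemma prod_range_qFactAt_count_succ_canonicalWord {R : Type*} [CommSemiring R] (q : R)
    (ν : List ℕ) :
    ∏ i ∈ range ν.length, qFactAt q ((canonicalWord ν).count (i + 1))
      = (ν.map (qFactAt q)).prod := by
  simp only [count_succ_canonicalWord]
  rw [prod_range, ← Fin.prod_univ_fun_getElem]
  simp

lemma qMultinomial_eq_invSum (ν : List ℕ) :
    qMultinomial ν = invSum RatFunc.X (canonicalWord ν) := by
  have h := invSum_mul_prod_qFactAt_count (RatFunc.X : RatFunc ℚ) (canonicalWord ν)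
    fun _ => mem_image_range_of_mem_canonicalWord
  rw [prod_image fun _ _ _ _ h => Nat.succ_injective h,
    prod_range_qFactAt_count_succ_canonicalWord, canonicalWord_length] at h
  have hne : (ν.map (qFactAt (RatFunc.X : RatFunc ℚ))).prod ≠ 0 := by
    rw [← prod_range_qFactAt_count_succ_canonicalWord]
    exact prod_ne_zero_iff.mpr fun _ _ => qFactAt_ratFuncX_ne_zero _
  exact div_eq_of_eq_mul hne h.symm

lemma periodic_card_filter_invL_wordSet (ν : List ℕ) (ks : List ℤ) :
    Function.Periodic (fun r : ZMod ν.sum => #{w ∈ WordSet ν | (invL w : ZMod ν.sum) = r})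
      (∑ i ∈ range ν.length, ks.getD i 0 * (ν.getD i 0 : ℤ) : ℤ) := by
  have hperiod (i : ℕ) : Function.Periodic
      (fun r : ZMod ν.sum => #{w ∈ WordSet ν | (invL w : ZMod ν.sum) = r}) (ν.getD i 0) := by
    rcases Nat.eq_zero_or_pos (ν.getD i 0) with h0 | hpos
    · rw [h0, Nat.cast_zero]
      exact Function.periodic_with_period_zero _
    · rw [← count_succ_canonicalWord] at hpos ⊢
      exact periodic_card_filter_invL (canonicalWord_length ν) (List.count_pos_iff.mp hpos)
  push_cast
  exact sum_induction _ _ (fun _ _ => Function.Periodic.add_period)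
    (Function.periodic_with_period_zero _) fun i _ => (hperiod i).int_mul _

theorem stmt4_general (ν : List ℕ) (ks : List ℤ) :
    ∃ h : List ℕ → ℤ,
      (RatFunc.X : RatFunc ℚ) ^ (∑ i ∈ Finset.range ν.length, ks.getD i 0 * (ν.getD i 0 : ℤ))
          * qMultinomial ν
        = ∑ w ∈ WordSet ν, (RatFunc.X : RatFunc ℚ) ^ ((ν.sum : ℤ) * h w + invL w) := by
  obtain ⟨h, hh⟩ := exists_sum_add_eq_sum_mul_add (WordSet ν) (fun w => (invL w : ℤ)) ν.sum _
    (by simpa only [Int.cast_natCast] using periodic_card_filter_invL_wordSet ν ks)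
    fun z => (RatFunc.X : RatFunc ℚ) ^ z
  refine ⟨h, ?_⟩
  rw [← hh, qMultinomial_eq_invSum, invSum, mul_sum]
  refine sum_congr rfl fun w _ => ?_
  rw [zpow_add₀ RatFunc.X_ne_zero, zpow_natCast]

/-- For any composition `ν = (ν₁,…,ν_m)` of `n` and integers `k₁,…,k_m` there is a
statistic `h` on words of weight `ν` such that
`q^{k₁ν₁ + ⋯ + k_mν_m} [n choose ν]_q = Σ_w q^{n·h(w) + inv(w)}`. -/
theorem stmt4 (ν : List ℕ) (ks : List ℤ) (hk : ks.length = ν.length) :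
    ∃ h : List ℕ → ℤ,
      (RatFunc.X : RatFunc ℚ) ^ (∑ i ∈ Finset.range ν.length, ks.getD i 0 * (ν.getD i 0 : ℤ))
          * qMultinomial ν
        = ∑ w ∈ WordSet ν, (RatFunc.X : RatFunc ℚ) ^ ((ν.sum : ℤ) * h w + invL w) :=
  stmt4_general ν ks
end

section
/- Let μ = (μ,...,μ) (n copies) and let T_0 ≤ ··· ≤ T_{n-1} be a weakly increasing n-tuple of semistandard tableaux of shape μ, with ρ the composition recording the multiplicities of equal consecutive tableaux. Then Inv(T_0,...,T_{n-1}) - d_μ lies in the subgroup of ℤ generated by ρ_1, ρ_2, ..., where d_μ = min{Inv(T) : T ∈ SSTab(μ)}. -/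
open Finset

attribute [local instance] Classical.propDecidable

/-- The cells of the Young diagram with row lengths `μ` (0-based row `i`, column `j`). -/
abbrev Cell (μ : List ℕ) := Σ i : Fin μ.length, Fin (μ.get i)

/-- The content `c(u) = (column) - (row)` of a cell. -/
def content {μ : List ℕ} (c : Cell μ) : ℤ := (c.2 : ℤ) - (c.1 : ℤ)

/-- A tableau of shape `μ` (entries in `ℕ`, positive) is semistandard if its rows weakly
increase and its columns strictly increase. -/
def IsSSYT {μ : List ℕ} (T : Cell μ → ℕ) : Prop :=
  (∀ c, 1 ≤ T c) ∧
  (∀ c c' : Cell μ, c.1 = c'.1 → (c.2 : ℕ) ≤ (c'.2 : ℕ) → T c ≤ T c') ∧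
  (∀ c c' : Cell μ, (c.1 : ℕ) < (c'.1 : ℕ) → (c.2 : ℕ) = (c'.2 : ℕ) → T c < T c')

/-- The LLT inversion statistic of an `n`-tuple `TT` of tableaux of shape `μ`: the number of
pairs of entries `T_i(u) > T_j(v)` with either `i < j` and `c(u) = c(v)`, or `i > j` and
`c(u) = c(v) - 1`. -/
noncomputable def InvT {μ : List ℕ} {n : ℕ} (TT : Fin n → Cell μ → ℕ) : ℕ :=
  (univ.filter fun p : (Fin n × Cell μ) × (Fin n × Cell μ) =>
      TT p.2.1 p.2.2 < TT p.1.1 p.1.2 ∧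
      ((p.1.1 < p.2.1 ∧ content p.1.2 = content p.2.2) ∨
       (p.2.1 < p.1.1 ∧ content p.1.2 = content p.2.2 - 1))).card

/-- The reading word of a tableau of shape `μ`: rows read left to right, top to bottom. -/
def readWord {μ : List ℕ} (T : Cell μ → ℕ) : List ℕ :=
  (List.range μ.length).flatMap fun i =>
    (List.range (μ.getD i 0)).map fun j =>
      if h : i < μ.length then
        if h' : j < μ.get ⟨i, h⟩ then T ⟨⟨i, h⟩, ⟨j, h'⟩⟩ else 0
      else 0

/-- The embedding of tuples of tableaux with entries in `Fin M` (entry `e` standing for the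
value `e + 1`) into tuples of tableaux with entries in `ℕ`. -/
def tupEmb (μ : List ℕ) (n M : ℕ) : (Fin n → Cell μ → Fin M) ↪ (Fin n → Cell μ → ℕ) :=
  ⟨fun TT a c => (TT a c : ℕ) + 1, by
    intro x y hxy
    funext a c
    have h := congrFun (congrFun hxy a) c
    dsimp only at h
    have h' : (x a c : ℕ) = (y a c : ℕ) := by omega
    exact Fin.ext h'⟩

/-- `SSTabSet μ n ν`: the (finite) set of `n`-tuples of semistandard tableaux of shape `μ`
with total weight `ν` (so all entries lie in `{1, …, ν.length}`), realized as tuples of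
functions `Cell μ → ℕ`. -/
noncomputable def SSTabSet (μ : List ℕ) (n : ℕ) (ν : List ℕ) :
    Finset (Fin n → Cell μ → ℕ) :=
  ((univ : Finset (Fin n → Cell μ → Fin ν.length)).map (tupEmb μ n ν.length)).filter
    fun TT => (∀ a, IsSSYT (TT a)) ∧
      ∀ k ∈ Finset.range ν.length,
        (univ.filter fun p : Fin n × Cell μ => TT p.1 p.2 = k + 1).card = ν.getD k 0

/-- `d_μ`: the minimal LLT inversion number over all `n`-tuples of semistandard tableaux of
shape `μ`. -/
noncomputable def dMin (μ : List ℕ) (n : ℕ) : ℕ :=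
  sInf {m | ∃ TT : Fin n → Cell μ → ℕ, (∀ a, IsSSYT (TT a)) ∧ InvT TT = m}

/-- The major index of a finite sequence in a linearly ordered set. -/
noncomputable def majSeq {n : ℕ} {α : Type*} [LinearOrder α] (w : Fin n → α) : ℕ :=
  ∑ i ∈ Finset.range n,
    if h : i + 1 < n then
      (if w ⟨i + 1, h⟩ < w ⟨i, Nat.lt_of_succ_lt h⟩ then i + 1 else 0)
    else 0

/-- The inversion number of a finite sequence in a linearly ordered set. -/
noncomputable def invSeq {n : ℕ} {α : Type*} [LinearOrder α] (w : Fin n → α) : ℕ :=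
  (univ.filter fun p : Fin n × Fin n => p.1 < p.2 ∧ w p.2 < w p.1).card

/-!
Write `Inv(T₀, …, T_{n-1}) = ∑_{i<j} I(Tᵢ, Tⱼ)`, where `I(S, T)` counts the inversions between a
tableau `S` and a later tableau `T`. For a cell `w` of `T`, the values of a semistandard `S` on the
diagonal of `w` and on the next diagonal increase with the row, so the inversions at `w` include
all cells of the first diagonal below some row `x` and all cells of the second one above `x`.
Because `μ` is a partition, the number of these cells is smallest when `x` is the row of `w`, and
there it is the number of inversions of `T` with itself at `w`. Hence `I(S, T) ≥ I(T, T) = e_μ`,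
a number depending on the shape only, and `d_μ = (n choose 2) e_μ`.

Equal tableaux of a weakly increasing tuple are consecutive, so in
`Inv - d_μ = ∑_{i<j} (I(Tᵢ, Tⱼ) - e_μ)` only pairs with `Tᵢ < Tⱼ` contribute, and grouping them
by `Tⱼ` gives `∑_t b_t ρ_t` with `b_t = ∑_{Tᵢ < t} (I(Tᵢ, t) - e_μ)`.
-/

theorem Finset.card_filter_prod_prod {ι C : Type*} [Fintype ι] [Fintype C]
    (P : ι × C → ι × C → Prop) :
    #{q : (ι × C) × (ι × C) | P q.1 q.2} = ∑ i, ∑ j, #{q : C × C | P (i, q.1) (j, q.2)} := by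
  simp only [Finset.card_filter, Fintype.sum_prod_type]
  exact Finset.sum_congr rfl fun i _ => Finset.sum_comm

theorem Finset.sum_sum_eq_sum_lt_add {ι M : Type*} [Fintype ι] [LinearOrder ι]
    [DecidableRel (α := ι) (· < ·)] [AddCommMonoid M] (F : ι → ι → M) (hF : ∀ i, F i i = 0) :
    ∑ i, ∑ j, F i j = ∑ p ∈ univ.filter (fun p : ι × ι => p.1 < p.2), (F p.1 p.2 + F p.2 p.1) := by
  have hdiag : ∑ p ∈ univ.filter (fun p : ι × ι => ¬ p.1 < p.2), F p.1 p.2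
      = ∑ p ∈ univ.filter (fun p : ι × ι => p.2 < p.1), F p.1 p.2 := by
    refine (Finset.sum_subset (fun p => by simpa using le_of_lt) fun p hp hgt => ?_).symm
    simp only [Finset.mem_filter, Finset.mem_univ, true_and, not_lt] at hp hgt
    rw [le_antisymm hp hgt, hF]
  have hswap : ∑ p ∈ univ.filter (fun p : ι × ι => p.2 < p.1), F p.1 p.2
      = ∑ p ∈ univ.filter (fun p : ι × ι => p.1 < p.2), F p.2 p.1 :=
    Finset.sum_nbij' Prod.swap Prod.swap (by simp) (by simp) (by simp) (by simp) (by simp)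
  rw [← Fintype.sum_prod_type', ← Finset.sum_filter_add_sum_filter_not _ (fun p : ι × ι => p.1 < p.2),
    hdiag, hswap, ← Finset.sum_add_distrib]

theorem Finset.sum_lt_pairs_eq_sum_image_mul_card {ι α β R : Type*} [Fintype ι] [LinearOrder ι]
    [DecidableRel (α := ι) (· < ·)] [DecidableEq α] [PartialOrder β] [CommSemiring R]
    (f : ι → α) (key : α → β) (hkey : Function.Injective key) (hf : Monotone (key ∘ f)) (g : α → α → R)
    (hg : ∀ i, g (f i) (f i) = 0) :
    ∑ p ∈ univ.filter (fun p : ι × ι => p.1 < p.2), g (f p.1) (f p.2)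
      = ∑ t ∈ univ.image f,
          (∑ i ∈ univ.filter (fun i => key (f i) < key t), g (f i) t) * (#{a | f a = t} : R) := by
  have hbefore : ∀ j, univ.filter (fun i => i < j ∧ f i ≠ f j)
      = univ.filter (fun i => key (f i) < key (f j)) := by
    intro j
    ext i
    simp only [Finset.mem_filter, Finset.mem_univ, true_and]
    refine ⟨fun ⟨hij, hne⟩ => lt_of_le_of_ne (hf hij.le) (hkey.ne hne), fun hlt => ⟨?_, ?_⟩⟩
    · exact lt_of_not_ge fun hji => hlt.not_ge (hf hji)
    · exact fun h => hlt.ne (congrArg key h)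
  calc ∑ p ∈ univ.filter (fun p : ι × ι => p.1 < p.2), g (f p.1) (f p.2)
      = ∑ j, ∑ i ∈ univ.filter (· < j), g (f i) (f j) := by
        rw [Finset.sum_filter, Fintype.sum_prod_type, Finset.sum_comm]
        simp only [Finset.sum_filter]
    _ = ∑ j, ∑ i ∈ univ.filter (fun i => key (f i) < key (f j)), g (f i) (f j) := by
        refine Finset.sum_congr rfl fun j _ => ?_
        rw [← hbefore, ← Finset.filter_filter]
        refine (Finset.sum_filter_of_ne fun i _ hne => ?_).symm
        exact fun hfij => hne (by rw [hfij, hg])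
    _ = _ := by
        rw [Finset.sum_comp (fun t => ∑ i ∈ univ.filter (fun i => key (f i) < key t), g (f i) t) f]
        simp only [nsmul_eq_mul, mul_comm]

theorem Finset.card_filter_eq_add_of_iff {α : Type*} {s : Finset α} {p q₁ q₂ : α → Prop}
    [DecidablePred p]
    [DecidablePred q₁] [DecidablePred q₂] (hp : ∀ k, p k ↔ q₁ k ∨ q₂ k)
    (hq : ∀ k, q₁ k → ¬ q₂ k) : #{k ∈ s | p k} = #{k ∈ s | q₁ k} + #{k ∈ s | q₂ k} := by
  rw [← Finset.card_union_of_disjoint (Finset.disjoint_filter.2 fun k _ => hq k),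
    ← Finset.filter_or]
  exact congrArg _ (Finset.filter_congr fun k _ => hp k)

def crossCount (R R' : Finset ℕ) (x : ℕ) : ℕ := #{k ∈ R | x < k} + #{k ∈ R' | k < x}

theorem crossCount_le_crossCount {R R' : Finset ℕ} {r : ℕ}
    (hdown : ∀ k ∈ R', k < r → k + 1 ∈ R) (hup : ∀ k ∈ R, r < k → k - 1 ∈ R') (x : ℕ) :
    crossCount R R' r ≤ crossCount R R' x := by
  unfold crossCount
  rcases le_or_gt r x with hrx | hxr
  · have hR := Finset.card_filter_eq_add_of_iff (s := R) (p := (r < ·))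
      (q₁ := fun k => r < k ∧ k ≤ x) (q₂ := (x < ·)) (fun k => by omega) (fun k => by omega)
    have hR' := Finset.card_filter_eq_add_of_iff (s := R') (p := (· < x))
      (q₁ := (· < r)) (q₂ := fun k => r ≤ k ∧ k < x) (fun k => by omega) (fun k => by omega)
    have hinj : #{k ∈ R | r < k ∧ k ≤ x} ≤ #{k ∈ R' | r ≤ k ∧ k < x} :=
      Finset.card_le_card_of_injOn (· - 1)
        (fun k hk => by
          simp only [Finset.coe_filter, Set.mem_ofPred] at hk ⊢
          exact ⟨hup k hk.1 hk.2.1, by omega, by omega⟩)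
        (fun k hk l hl hkl => by
          simp only [Finset.coe_filter, Set.mem_ofPred] at hk hl hkl
          omega)
    omega
  · have hR := Finset.card_filter_eq_add_of_iff (s := R) (p := (x < ·))
      (q₁ := fun k => x < k ∧ k ≤ r) (q₂ := (r < ·)) (fun k => by omega) (fun k => by omega)
    have hR' := Finset.card_filter_eq_add_of_iff (s := R') (p := (· < r))
      (q₁ := (· < x)) (q₂ := fun k => x ≤ k ∧ k < r) (fun k => by omega) (fun k => by omega)
    have hinj : #{k ∈ R' | x ≤ k ∧ k < r} ≤ #{k ∈ R | x < k ∧ k ≤ r} :=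
      Finset.card_le_card_of_injOn (· + 1)
        (fun k hk => by
          simp only [Finset.coe_filter, Set.mem_ofPred] at hk ⊢
          exact ⟨hdown k hk.1 hk.2.2, by omega, by omega⟩)
        (fun k _ l _ hkl => by simpa using hkl)
    omega

section Tableaux

variable {μ : List ℕ}

theorem Cell.ext_of_row_eq_of_content_eq {u v : Cell μ} (hr : (u.1 : ℕ) = v.1)
    (hc : content u = content v) : u = v := by
  obtain ⟨⟨i, hi⟩, ⟨j, hj⟩⟩ := u
  obtain ⟨⟨i', hi'⟩, ⟨j', hj'⟩⟩ := v
  simp only [content] at hr hc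
  subst hr
  obtain rfl : j = j' := by omega
  rfl

namespace IsSSYT

variable {T : Cell μ → ℕ}

theorem lt_of_row_lt_of_col_le (hT : IsSSYT T) {u v : Cell μ} (hr : (u.1 : ℕ) < v.1)
    (hc : (u.2 : ℕ) ≤ v.2) : T u < T v :=
  calc T u < T ⟨v.1, ⟨u.2, hc.trans_lt v.2.2⟩⟩ := hT.2.2 _ _ hr rfl
    _ ≤ T v := hT.2.1 _ _ rfl hc

theorem le_of_row_le_of_col_le (hμ : μ.Pairwise (· ≥ ·)) (hT : IsSSYT T) {u v : Cell μ}
    (hr : (u.1 : ℕ) ≤ v.1) (hc : (u.2 : ℕ) ≤ v.2) : T u ≤ T v := by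
  rcases hr.lt_or_eq with hr | hr
  · have hv : (v.2 : ℕ) < μ.get u.1 := v.2.2.trans_le (hμ.rel_get_of_le (Fin.le_def.2 hr.le))
    calc T u ≤ T ⟨u.1, ⟨v.2, hv⟩⟩ := hT.2.1 _ _ rfl hc
      _ ≤ T v := (hT.2.2 ⟨u.1, ⟨v.2, hv⟩⟩ v hr rfl).le
  · obtain ⟨⟨i, hi⟩, ⟨j, hj⟩⟩ := u
    obtain ⟨⟨i', hi'⟩, ⟨j', hj'⟩⟩ := v
    simp only at hr
    subst hr
    exact hT.2.1 _ _ rfl hc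

theorem lt_iff_row_lt_of_content_eq (hT : IsSSYT T) {u v : Cell μ}
    (hc : content u = content v) : T u < T v ↔ (u.1 : ℕ) < v.1 := by
  simp only [content] at hc
  refine ⟨fun h => ?_, fun h => hT.lt_of_row_lt_of_col_le h (by omega)⟩
  by_contra hr
  rcases (not_lt.1 hr).lt_or_eq with hr | hr
  · exact (hT.lt_of_row_lt_of_col_le hr (by omega)).not_gt h
  · exact h.ne (congrArg T (Cell.ext_of_row_eq_of_content_eq hr.symm (by simp only [content]; omega)))

theorem lt_iff_row_lt_of_content_eq_add_one (hμ : μ.Pairwise (· ≥ ·)) (hT : IsSSYT T)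
    {u v : Cell μ} (hc : content u = content v + 1) : T u < T v ↔ (u.1 : ℕ) < v.1 := by
  simp only [content] at hc
  refine ⟨fun h => ?_, fun h => hT.lt_of_row_lt_of_col_le h (by omega)⟩
  by_contra hr
  exact (hT.le_of_row_le_of_col_le hμ (not_lt.1 hr) (by omega)).not_gt h

theorem exists_row_threshold (hT : IsSSYT T) (d : ℤ) (t : ℕ) :
    ∃ x : ℕ, (∀ u, content u = d → x < u.1 → t < T u) ∧
      ∀ v, content v = d + 1 → (v.1 : ℕ) < x → T v < t := by
  by_cases hlow : ∃ u, content u = d ∧ T u ≤ t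
  · obtain ⟨U, hU, hUmax⟩ := Finset.exists_max_image
      (univ.filter fun u => content u = d ∧ T u ≤ t) (fun u => (u.1 : ℕ))
      (by simpa [Finset.Nonempty] using hlow)
    obtain ⟨hUd, hUt⟩ := (Finset.mem_filter.1 hU).2
    refine ⟨U.1, fun u hu hUu => ?_, fun v hv hvU => ?_⟩
    · by_contra! hut
      exact hUu.not_ge (hUmax u (by simp [hu, hut]))
    · refine (hT.lt_of_row_lt_of_col_le hvU ?_).trans_le hUt
      simp only [content] at hv hUd
      omega
  · push Not at hlow
    exact ⟨0, fun u hu _ => hlow u hu, fun v _ hv => absurd hv (Nat.not_lt_zero _)⟩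

end IsSSYT

def diagRows (μ : List ℕ) (d : ℤ) : Finset ℕ :=
  (univ.filter fun u : Cell μ => content u = d).image fun u => (u.1 : ℕ)

theorem mem_diagRows {d : ℤ} {k : ℕ} :
    k ∈ diagRows μ d ↔ ∃ u : Cell μ, content u = d ∧ (u.1 : ℕ) = k := by
  simp [diagRows]

theorem card_filter_content_eq (d : ℤ) (P : ℕ → Prop) [DecidablePred P] :
    #{u : Cell μ | content u = d ∧ P u.1} = #{k ∈ diagRows μ d | P k} := by
  rw [diagRows, Finset.filter_image, Finset.card_image_of_injOn, Finset.filter_filter]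
  intro u hu v hv huv
  simp only [Finset.coe_filter, Finset.mem_filter, Finset.mem_univ, true_and] at hu hv
  exact Cell.ext_of_row_eq_of_content_eq huv (hu.1.trans hv.1.symm)

theorem add_one_mem_diagRows (hμ : μ.Pairwise (· ≥ ·)) {w : Cell μ} {k : ℕ}
    (hk : k ∈ diagRows μ (content w + 1)) (hkw : k < w.1) : k + 1 ∈ diagRows μ (content w) := by
  obtain ⟨v, hv, rfl⟩ := mem_diagRows.1 hk
  have hrow : (v.1 : ℕ) + 1 < μ.length := lt_of_le_of_lt hkw w.1.2
  have hcol : (v.2 : ℕ) < μ.get ⟨v.1 + 1, hrow⟩ := by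
    have := hμ.rel_get_of_le (a := ⟨v.1 + 1, hrow⟩) (b := w.1) (Fin.le_def.2 hkw)
    have := w.2.2
    simp only [content] at hv
    omega
  refine mem_diagRows.2 ⟨⟨⟨v.1 + 1, hrow⟩, ⟨v.2, hcol⟩⟩, ?_, rfl⟩
  simp only [content] at hv ⊢
  push_cast
  omega

theorem sub_one_mem_diagRows (hμ : μ.Pairwise (· ≥ ·)) {d : ℤ} {k : ℕ}
    (hk : k ∈ diagRows μ d) (hk0 : 0 < k) : k - 1 ∈ diagRows μ (d + 1) := by
  obtain ⟨u, hu, rfl⟩ := mem_diagRows.1 hk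
  have hrow : (u.1 : ℕ) - 1 < μ.length := lt_of_le_of_lt (Nat.sub_le _ _) u.1.2
  have hcol : (u.2 : ℕ) < μ.get ⟨u.1 - 1, hrow⟩ :=
    u.2.2.trans_le (hμ.rel_get_of_le (Fin.le_def.2 (Nat.sub_le _ _)))
  refine mem_diagRows.2 ⟨⟨⟨u.1 - 1, hrow⟩, ⟨u.2, hcol⟩⟩, ?_, rfl⟩
  simp only [content] at hu ⊢
  push_cast [Nat.one_le_iff_ne_zero.2 hk0.ne']
  omega

def cellInv (S T : Cell μ → ℕ) (w : Cell μ) : ℕ :=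
  #{u | content u = content w ∧ T w < S u} + #{v | content v = content w + 1 ∧ S v < T w}

/-- `I(S, T)`: the inversions between `Tᵢ = S` and `Tⱼ = T` for `i < j`, grouped by
the cell `w` of `T` they involve. -/
def pairInv (S T : Cell μ → ℕ) : ℕ := ∑ w, cellInv S T w

theorem InvT_eq_sum_pairInv {n : ℕ} (TT : Fin n → Cell μ → ℕ) :
    InvT TT = ∑ p ∈ univ.filter (fun p : Fin n × Fin n => p.1 < p.2),
      pairInv (TT p.1) (TT p.2) := by
  calc InvT TT = ∑ i, ∑ j, #{q : Cell μ × Cell μ | TT j q.2 < TT i q.1 ∧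
        ((i < j ∧ content q.1 = content q.2) ∨ (j < i ∧ content q.1 = content q.2 - 1))} := by
        unfold InvT
        convert Finset.card_filter_prod_prod (fun x y => TT y.1 y.2 < TT x.1 x.2 ∧
          ((x.1 < y.1 ∧ content x.2 = content y.2) ∨ (y.1 < x.1 ∧ content x.2 = content y.2 - 1)))
    _ = _ := by
        rw [Finset.sum_sum_eq_sum_lt_add _ fun i => by simp]
        refine Finset.sum_congr rfl fun p hp => ?_
        have hlt : p.1 < p.2 := (Finset.mem_filter.1 hp).2
        simp only [pairInv, cellInv, Finset.sum_add_distrib, Finset.card_filter, Fintype.sum_prod_type,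
          hlt, hlt.not_gt, true_and, false_and, or_false, false_or]
        rw [Finset.sum_comm]
        congr 1 <;>
          refine Finset.sum_congr rfl fun w _ => Finset.sum_congr rfl fun v _ => if_congr ?_ rfl rfl <;>
          constructor <;> exact fun ⟨h₁, h₂⟩ => ⟨by omega, by omega⟩

/-- `e_μ`. -/
def shapeInv (μ : List ℕ) : ℕ :=
  ∑ w : Cell μ, crossCount (diagRows μ (content w)) (diagRows μ (content w + 1)) w.1

theorem cellInv_self (hμ : μ.Pairwise (· ≥ ·)) {T : Cell μ → ℕ} (hT : IsSSYT T) (w : Cell μ) :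
    cellInv T T w = crossCount (diagRows μ (content w)) (diagRows μ (content w + 1)) w.1 := by
  rw [cellInv, crossCount, ← card_filter_content_eq, ← card_filter_content_eq]
  congr 1 <;> refine congrArg _ (Finset.filter_congr fun u _ => and_congr_right fun hu => ?_)
  · exact hT.lt_iff_row_lt_of_content_eq hu.symm
  · exact hT.lt_iff_row_lt_of_content_eq_add_one hμ hu

theorem crossCount_le_cellInv (hμ : μ.Pairwise (· ≥ ·)) {S : Cell μ → ℕ} (hS : IsSSYT S)
    (T : Cell μ → ℕ) (w : Cell μ) :
    crossCount (diagRows μ (content w)) (diagRows μ (content w + 1)) w.1 ≤ cellInv S T w := by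
  obtain ⟨x, habove, hbelow⟩ := hS.exists_row_threshold (content w) (T w)
  calc _ ≤ crossCount (diagRows μ (content w)) (diagRows μ (content w + 1)) x :=
        crossCount_le_crossCount (fun k hk hkw => add_one_mem_diagRows hμ hk hkw)
          (fun k hk hwk => sub_one_mem_diagRows hμ hk (by omega)) x
    _ ≤ cellInv S T w := by
        rw [crossCount, cellInv, ← card_filter_content_eq, ← card_filter_content_eq]
        exact add_le_add
          (Finset.card_le_card (Finset.monotone_filter_right _ fun u _ hu => ⟨hu.1, habove u hu.1 hu.2⟩))
          (Finset.card_le_card (Finset.monotone_filter_right _ fun v _ hv => ⟨hv.1, hbelow v hv.1 hv.2⟩))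

theorem pairInv_self (hμ : μ.Pairwise (· ≥ ·)) {T : Cell μ → ℕ} (hT : IsSSYT T) :
    pairInv T T = shapeInv μ :=
  Finset.sum_congr rfl fun w _ => cellInv_self hμ hT w

theorem shapeInv_le_pairInv (hμ : μ.Pairwise (· ≥ ·)) {S : Cell μ → ℕ} (hS : IsSSYT S)
    (T : Cell μ → ℕ) : shapeInv μ ≤ pairInv S T :=
  Finset.sum_le_sum fun w _ => crossCount_le_cellInv hμ hS T w

def rowTableau (μ : List ℕ) : Cell μ → ℕ := fun c => (c.1 : ℕ) + 1

theorem isSSYT_rowTableau : IsSSYT (rowTableau μ) :=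
  ⟨fun _ => Nat.le_add_left _ _, fun c c' h _ => by simp [rowTableau, h],
    fun _ _ h _ => Nat.add_lt_add_right h 1⟩

theorem dMin_eq (hμ : μ.Pairwise (· ≥ ·)) (n : ℕ) :
    dMin μ n = #{p : Fin n × Fin n | p.1 < p.2} * shapeInv μ := by
  refine IsLeast.csInf_eq ⟨⟨fun _ => rowTableau μ, fun _ => isSSYT_rowTableau, ?_⟩, ?_⟩
  · rw [InvT_eq_sum_pairInv, Finset.sum_congr rfl fun _ _ => pairInv_self hμ isSSYT_rowTableau,
      Finset.sum_const, smul_eq_mul]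
  · rintro _ ⟨TT, hTT, rfl⟩
    rw [InvT_eq_sum_pairInv, Finset.card_eq_sum_ones, Finset.sum_mul, one_mul]
    exact Finset.sum_le_sum fun p _ => shapeInv_le_pairInv hμ (hTT p.1) _

theorem readWord_injective : Function.Injective (readWord (μ := μ)) := by
  intro T T' h
  simp only [readWord, List.flatMap_def] at h
  have hrows := List.map_inj_left.1 (List.eq_iff_flatten_eq.2 ⟨h, by simp [Function.comp_def]⟩)
  funext ⟨⟨i, hi⟩, ⟨j, hj⟩⟩
  have hj' : j < μ[i] := hj
  simpa [hi, hj', List.getElem?_range] using congrArg (·[j]?) (hrows i (List.mem_range.2 hi))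

end Tableaux

/-- For a weakly increasing `n`-tuple `T₀ ≤ ⋯ ≤ T_{n-1}` of semistandard tableaux of shape
`μ` (ordered lexicographically by reading words), `Inv(T₀,…,T_{n-1}) - d_𝛍` lies in the
subgroup of `ℤ` generated by the multiplicities `ρ₁, ρ₂, …` of the distinct tableaux
appearing, where `d_𝛍` is the minimal inversion number. -/
theorem stmt11 (μ : List ℕ) (hμ : μ.Pairwise (· ≥ ·)) (n : ℕ)
    (TT : Fin n → Cell μ → ℕ) (hssyt : ∀ a, IsSSYT (TT a))
    (hmono : ∀ a b : Fin n, a ≤ b → readWord (TT a) ≤ readWord (TT b)) :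
    ∃ b : (Cell μ → ℕ) → ℤ,
      (InvT TT : ℤ) - (dMin μ n : ℤ)
        = ∑ t ∈ Finset.univ.image TT,
            b t * ((Finset.univ.filter fun a : Fin n => TT a = t).card : ℤ) := by
  have hsplit : (InvT TT : ℤ) - dMin μ n
      = ∑ p ∈ univ.filter (fun p : Fin n × Fin n => p.1 < p.2),
          ((pairInv (TT p.1) (TT p.2) : ℤ) - shapeInv μ) := by
    rw [InvT_eq_sum_pairInv, dMin_eq hμ, Finset.sum_sub_distrib, Finset.sum_const, nsmul_eq_mul]
    push_cast
    ring
  exact ⟨_, hsplit.trans <| Finset.sum_lt_pairs_eq_sum_image_mul_card TT readWord readWord_injective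
    hmono (fun s t => (pairInv s t : ℤ) - shapeInv μ)
    fun i => by rw [pairInv_self hμ (hssyt i), sub_self]⟩
end

section
/- Let w be a word over a totally ordered alphabet, and let (P, Q) be the pair of tableaux produced by the Robinson–Schensted algorithm applied to w. Then maj(w) = maj(Q), where maj(w) is the sum of positions i with w_i > w_{i+1} and maj(Q) is the sum of descents of the standard tableau Q. -/
open Finset

/-- Schensted row insertion of a letter `x` into a tableau given as a list of rows:
`x` is appended to the first row if every entry there is `≤ x`; otherwise it replaces the
leftmost entry `> x`, which is bumped into the next row, and so on. -/
def rowInsert : List (List ℕ) → ℕ → List (List ℕ)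
  | [], x => [[x]]
  | r :: rest, x =>
    if ∀ y ∈ r, y ≤ x then (r ++ [x]) :: rest
    else
      let idx := r.findIdx fun y => x < y
      r.set idx x :: rowInsert rest (r.getD idx 0)

/-- Append the label `x` to row `r` of the recording tableau `Q` (creating a new row if
necessary). -/
def addAt (Q : List (List ℕ)) (r x : ℕ) : List (List ℕ) :=
  if h : r < Q.length then Q.set r (Q.get ⟨r, h⟩ ++ [x]) else Q ++ [[x]]

/-- The Robinson–Schensted correspondence: inserting the letters of `w` one by one produces
the insertion tableau `P`; the recording tableau `Q` records in which row a new cell is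
created at each step. -/
def RS (w : List ℕ) : List (List ℕ) × List (List ℕ) :=
  (w.zipIdx.map Prod.swap).foldl
    (fun PQ p =>
      let P' := rowInsert PQ.1 p.2
      let r := ((List.range P'.length).find? fun i =>
          (PQ.1.map List.length).getD i 0 ≠ (P'.map List.length).getD i 0).getD 0
      (P', addAt PQ.2 r (p.1 + 1)))
    ([], [])

/-- The row (0-based) of the recording tableau containing the entry `k`. -/
def rowOf (Q : List (List ℕ)) (k : ℕ) : ℕ := Q.findIdx fun r => k ∈ r

/-- The major index of a standard tableau `Q` with entries `1, …, n`: the sum of the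
descents of `Q`, i.e. of the entries `i` such that `i + 1` lies in a strictly lower row. -/
def majQ (Q : List (List ℕ)) (n : ℕ) : ℕ :=
  ∑ i ∈ Finset.Icc 1 (n - 1), if rowOf Q i < rowOf Q (i + 1) then i else 0

/-! When `x` and then `y` are inserted into a tableau whose rows are weakly increasing, the
cell created by `y` lies strictly below the cell created by `x` iff `y < x`: a smaller `y` is
bumped, row by row, by entries no larger than those `x` bumped, so its path ends strictly lower;
a larger `y` bumps from strictly to the right of `x` in every row, so its path ends weakly higher.
The entry `k + 1` of the recording tableau sits in the row where the insertion of `w_k` creates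
a cell, so `i` is a descent of `Q` exactly when `w_i > w_{i+1}`, and the two major indices are
sums over the same set. -/

def newCellRow : List (List ℕ) → ℕ → ℕ
  | [], _ => 0
  | r :: rest, x =>
    if ∀ y ∈ r, y ≤ x then 0
    else newCellRow rest (r.getD (r.findIdx fun y => x < y) 0) + 1

def RowsSorted (P : List (List ℕ)) : Prop := ∀ r ∈ P, r.Pairwise (· ≤ ·)

section Bump

variable {r : List ℕ} {x : ℕ}

theorem findIdx_lt_length_of_not_forall_le (h : ¬ ∀ y ∈ r, y ≤ x) :
    r.findIdx (fun y => x < y) < r.length := by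
  push Not at h
  obtain ⟨y, hy, hxy⟩ := h
  exact List.findIdx_lt_length_of_exists ⟨y, hy, by simpa using hxy⟩

theorem lt_getElem_findIdx (h : r.findIdx (fun y => x < y) < r.length) :
    x < r[r.findIdx fun y => x < y] := by
  simpa using List.findIdx_getElem (w := h)

theorem getElem_le_of_lt_findIdx {j : ℕ} (hj : j < r.findIdx (fun y => x < y))
    (hj' : j < r.length) : r[j] ≤ x := by
  simpa using List.not_of_lt_findIdx hj

theorem getElem_set_findIdx_le {j : ℕ} (hj : j ≤ r.findIdx (fun y => x < y))
    (hjl : j < (r.set (r.findIdx fun y => x < y) x).length) :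
    (r.set (r.findIdx fun y => x < y) x)[j] ≤ x := by
  rw [List.getElem_set]
  split_ifs with h
  · exact le_rfl
  · exact getElem_le_of_lt_findIdx (lt_of_le_of_ne hj (Ne.symm h)) _

end Bump

section RowInsert

variable {r : List ℕ} {rest : List (List ℕ)} {x : ℕ}

theorem rowInsert_cons_of_forall_le (h : ∀ y ∈ r, y ≤ x) :
    rowInsert (r :: rest) x = (r ++ [x]) :: rest := by
  rw [rowInsert, if_pos h]

theorem rowInsert_cons_of_not_forall_le (h : ¬ ∀ y ∈ r, y ≤ x) :
    rowInsert (r :: rest) x =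
      r.set (r.findIdx fun y => x < y) x
        :: rowInsert rest (r.getD (r.findIdx fun y => x < y) 0) := by
  rw [rowInsert, if_neg h]

theorem newCellRow_cons_of_forall_le (h : ∀ y ∈ r, y ≤ x) : newCellRow (r :: rest) x = 0 := by
  rw [newCellRow, if_pos h]

theorem newCellRow_cons_of_not_forall_le (h : ¬ ∀ y ∈ r, y ≤ x) :
    newCellRow (r :: rest) x = newCellRow rest (r.getD (r.findIdx fun y => x < y) 0) + 1 := by
  rw [newCellRow, if_neg h]

end RowInsert

theorem newCellRow_le_length (P : List (List ℕ)) (x : ℕ) : newCellRow P x ≤ P.length := by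
  induction P generalizing x with
  | nil => simp [newCellRow]
  | cons r rest ih =>
    rw [newCellRow]
    split
    · simp
    · simpa using ih _

theorem length_rowInsert (P : List (List ℕ)) (x : ℕ) :
    (rowInsert P x).length = max P.length (newCellRow P x + 1) := by
  induction P generalizing x with
  | nil => simp [rowInsert, newCellRow]
  | cons r rest ih =>
    rw [rowInsert, newCellRow]
    split
    · simp only [List.length_cons]; omega
    · simp only [List.length_cons, ih]; omega

theorem getD_map_length_rowInsert (P : List (List ℕ)) (x i : ℕ) :
    ((rowInsert P x).map List.length).getD i 0
      = (P.map List.length).getD i 0 + if i = newCellRow P x then 1 else 0 := by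
  induction P generalizing x i with
  | nil => cases i <;> simp [rowInsert, newCellRow]
  | cons r rest ih =>
    rw [rowInsert, newCellRow]
    split
    · cases i <;> simp
    · cases i with
      | zero => simp
      | succ i =>
        simpa only [List.map_cons, List.getD_cons_succ, Nat.add_right_cancel_iff] using ih _ i

theorem RowsSorted.rowInsert {P : List (List ℕ)} (hP : RowsSorted P) (x : ℕ) :
    RowsSorted (rowInsert P x) := by
  induction P generalizing x with
  | nil => simp [RowsSorted, _root_.rowInsert]
  | cons r rest ih =>
    have hr : r.Pairwise (· ≤ ·) := hP r (by simp)
    have hrest : RowsSorted rest := fun t ht => hP t (List.mem_cons_of_mem _ ht)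
    by_cases hc : ∀ y ∈ r, y ≤ x
    · rw [rowInsert_cons_of_forall_le hc]
      refine List.forall_mem_cons.2 ⟨?_, hrest⟩
      exact List.pairwise_append.2 ⟨hr, by simp, by simpa using hc⟩
    · rw [rowInsert_cons_of_not_forall_le hc]
      refine List.forall_mem_cons.2 ⟨?_, ih hrest _⟩
      have hi := findIdx_lt_length_of_not_forall_le hc
      have hxi := lt_getElem_findIdx hi
      rw [List.pairwise_iff_getElem] at hr ⊢
      intro a b ha hb hab
      simp only [List.length_set] at ha hb
      simp only [List.getElem_set]
      split_ifs with h1 h2 h2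
      · omega
      · subst h1; exact hxi.le.trans (hr _ _ hi hb hab)
      · subst h2; exact getElem_le_of_lt_findIdx hab ha
      · exact hr _ _ ha hb hab

theorem newCellRow_lt_newCellRow_rowInsert (P : List (List ℕ)) {x y : ℕ} (hyx : y < x) :
    newCellRow P x < newCellRow (rowInsert P x) y := by
  induction P generalizing x y with
  | nil =>
    rw [rowInsert, newCellRow_cons_of_not_forall_le (by simpa using hyx)]
    simp [newCellRow]
  | cons r rest ih =>
    by_cases hc : ∀ z ∈ r, z ≤ x
    · rw [rowInsert_cons_of_forall_le hc, newCellRow_cons_of_forall_le hc,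
        newCellRow_cons_of_not_forall_le (by simpa using Or.inr hyx)]
      omega
    · have hi := findIdx_lt_length_of_not_forall_le hc
      set i := r.findIdx (fun z => x < z)
      have hxi : x < r[i] := lt_getElem_findIdx hi
      have hix : (r.set i x)[i]'(by simpa using hi) = x := by simp
      have hc' : ¬ ∀ v ∈ r.set i x, v ≤ y := fun h =>
        hyx.not_ge (hix ▸ h _ (List.getElem_mem _))
      rw [rowInsert_cons_of_not_forall_le hc, newCellRow_cons_of_not_forall_le hc,
        newCellRow_cons_of_not_forall_le hc']
      have hj := findIdx_lt_length_of_not_forall_le hc'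
      set j := (r.set i x).findIdx (fun v => y < v)
      have hji : j ≤ i := by
        by_contra! hij
        simpa [hix, hyx] using List.not_of_lt_findIdx hij
      have hbumped : (r.set i x)[j] < r[i] := (getElem_set_findIdx_le hji hj).trans_lt hxi
      rw [List.getD_eq_getElem _ _ hj, List.getD_eq_getElem _ _ hi]
      exact Nat.succ_lt_succ (ih hbumped)

theorem newCellRow_rowInsert_le {P : List (List ℕ)} (hP : RowsSorted P) {x y : ℕ}
    (hxy : x ≤ y) :
    newCellRow (rowInsert P x) y ≤ newCellRow P x := by
  induction P generalizing x y with
  | nil => simp [rowInsert, newCellRow_cons_of_forall_le, hxy]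
  | cons r rest ih =>
    by_cases hc : ∀ z ∈ r, z ≤ x
    · have hc' : ∀ v ∈ r ++ [x], v ≤ y := by
        simpa using fun v hv => hv.elim (fun hv => (hc v hv).trans hxy) (· ▸ hxy)
      rw [rowInsert_cons_of_forall_le hc, newCellRow_cons_of_forall_le hc,
        newCellRow_cons_of_forall_le hc']
    · have hi := findIdx_lt_length_of_not_forall_le hc
      set i := r.findIdx (fun z => x < z)
      rw [rowInsert_cons_of_not_forall_le hc, newCellRow_cons_of_not_forall_le hc]
      by_cases hc' : ∀ v ∈ r.set i x, v ≤ y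
      · rw [newCellRow_cons_of_forall_le hc']; omega
      rw [newCellRow_cons_of_not_forall_le hc']
      have hj := findIdx_lt_length_of_not_forall_le hc'
      set j := (r.set i x).findIdx (fun v => y < v)
      have hij : i < j := by
        refine List.lt_findIdx_of_not (by simpa using hi) fun k hk => ?_
        simpa using (getElem_set_findIdx_le hk _).trans hxy
      have hbumped : r[i] ≤ (r.set i x)[j] := by
        rw [List.getElem_set, if_neg hij.ne]
        exact List.pairwise_iff_getElem.1 (hP r (by simp)) _ _ hi _ hij
      rw [List.getD_eq_getElem _ _ hj, List.getD_eq_getElem _ _ hi]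
      exact Nat.succ_le_succ (ih (fun t ht => hP t (List.mem_cons_of_mem _ ht)) hbumped)

theorem newCellRow_lt_newCellRow_rowInsert_iff {P : List (List ℕ)} (hP : RowsSorted P)
    (x y : ℕ) :
    newCellRow P x < newCellRow (rowInsert P x) y ↔ y < x := by
  refine ⟨fun h => ?_, newCellRow_lt_newCellRow_rowInsert P⟩
  by_contra! hxy
  exact (newCellRow_rowInsert_le hP hxy).not_gt h

theorem List.findIdx_set_of_eq {α : Type*} {l : List α} {p : α → Bool} {i : ℕ} {a : α}
    (h : i < l.length) (ha : p a = p l[i]) : (l.set i a).findIdx p = l.findIdx p := by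
  have hmap : (l.set i a).map p = l.map p :=
    List.ext_getElem (by simp) fun j _ _ => by
      rcases eq_or_ne i j with rfl | hij
      · simp [ha]
      · simp [hij]
  simpa only [List.findIdx_map, Function.id_comp] using congrArg (List.findIdx id) hmap

section RecordingTableau

variable {Q : List (List ℕ)} {r x k : ℕ}

theorem length_addAt (hr : r ≤ Q.length) : (addAt Q r x).length = max Q.length (r + 1) := by
  unfold addAt
  split <;> simp <;> omega

theorem mem_flatten_addAt : k ∈ (addAt Q r x).flatten ↔ k ∈ Q.flatten ∨ k = x := by
  unfold addAt
  split
  · next h =>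
    rw [List.set_eq_take_append_cons_drop, if_pos h]
    conv_rhs => rw [← List.take_append_drop r Q, List.drop_eq_getElem_cons h]
    simp only [List.get_eq_getElem, List.flatten_append, List.flatten_cons, List.mem_append,
      List.mem_singleton]
    tauto
  · simp

theorem rowOf_addAt_of_ne (hkx : k ≠ x) (hk : k ∈ Q.flatten) :
    rowOf (addAt Q r x) k = rowOf Q k := by
  unfold addAt rowOf
  split
  · next h => exact List.findIdx_set_of_eq h (by simp [hkx])
  · have hlt : Q.findIdx (fun row => k ∈ row) < Q.length :=
      List.findIdx_lt_length_of_exists (by simpa using List.mem_flatten.1 hk)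
    rw [List.findIdx_append, if_pos hlt]

theorem rowOf_addAt_self (hr : r ≤ Q.length) (hx : x ∉ Q.flatten) :
    rowOf (addAt Q r x) x = r := by
  have hQ : ∀ row ∈ Q, x ∉ row := fun row hrow hxr =>
    hx (List.mem_flatten.2 ⟨row, hrow, hxr⟩)
  unfold addAt rowOf
  split
  · next h =>
    rw [List.findIdx_eq (by simpa using h)]
    refine ⟨by simp, fun j hj => ?_⟩
    rw [List.getElem_set, if_neg hj.ne']
    simpa using hQ _ (List.getElem_mem _)
  · rw [List.findIdx_append, if_neg (by simpa using hQ), List.findIdx_singleton]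
    simp only [List.mem_singleton, decide_true, if_true]
    omega

end RecordingTableau

theorem RS_nil : RS [] = ([], []) := rfl

theorem RS_append_singleton (w : List ℕ) (x : ℕ) :
    RS (w ++ [x]) =
      (rowInsert (RS w).1 x, addAt (RS w).2 (newCellRow (RS w).1 x) (w.length + 1)) := by
  have hrow : ∀ P : List (List ℕ),
      ((List.range (rowInsert P x).length).find? fun i =>
        (P.map List.length).getD i 0 ≠ ((rowInsert P x).map List.length).getD i 0).getD 0
        = newCellRow P x := fun P => by
    rw [List.find?_range_eq_some.2 ⟨?_, ?_, fun j hj => ?_⟩]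
    · rfl
    · rw [decide_eq_true_iff, getD_map_length_rowInsert, if_pos rfl]; omega
    · rw [List.mem_range, length_rowInsert]; omega
    · rw [getD_map_length_rowInsert, if_neg hj.ne]; simp
  have hzip : (w ++ [x]).zipIdx.map Prod.swap = w.zipIdx.map Prod.swap ++ [(w.length, x)] := by
    simp [List.zipIdx_append]
  rw [RS, hzip, List.foldl_append, List.foldl_cons, List.foldl_nil]
  change (rowInsert (RS w).1 x, addAt (RS w).2 _ (w.length + 1)) = _
  rw [hrow]
  rfl

theorem RS_snd_length (w : List ℕ) : (RS w).2.length = (RS w).1.length := by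
  induction w using List.reverseRecOn with
  | nil => rfl
  | append_singleton w x ih =>
    rw [RS_append_singleton, length_addAt (ih ▸ newCellRow_le_length _ _), length_rowInsert, ih]

theorem rowsSorted_RS_fst (w : List ℕ) : RowsSorted (RS w).1 := by
  induction w using List.reverseRecOn with
  | nil => simp [RS_nil, RowsSorted]
  | append_singleton w x ih =>
    rw [RS_append_singleton]
    exact ih.rowInsert x

theorem mem_flatten_RS_snd {w : List ℕ} {k : ℕ} :
    k ∈ (RS w).2.flatten ↔ 1 ≤ k ∧ k ≤ w.length := by
  induction w using List.reverseRecOn with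
  | nil => simp only [RS_nil, List.flatten_nil, List.not_mem_nil, List.length_nil, false_iff]; omega
  | append_singleton w x ih =>
    rw [RS_append_singleton, mem_flatten_addAt, ih, List.length_append, List.length_singleton]
    omega

theorem rowOf_RS_snd {w : List ℕ} {k : ℕ} (hk : k < w.length) :
    rowOf (RS w).2 (k + 1) = newCellRow (RS (w.take k)).1 w[k] := by
  induction w using List.reverseRecOn with
  | nil => simp at hk
  | append_singleton w x ih =>
    rw [RS_append_singleton]
    rcases (Nat.lt_succ_iff_lt_or_eq.1 (by simpa using hk)) with hk' | rfl
    · rw [rowOf_addAt_of_ne (by omega) (mem_flatten_RS_snd.2 (by omega)), ih hk',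
        List.take_append_of_le_length hk'.le]
      simp [List.getElem_append_left hk']
    · rw [rowOf_addAt_self (RS_snd_length w ▸ newCellRow_le_length _ _)
        (fun h => by simpa using mem_flatten_RS_snd.1 h)]
      simp

theorem rowOf_RS_snd_lt_rowOf_RS_snd_iff {w : List ℕ} {k : ℕ} (hk : k + 1 < w.length) :
    rowOf (RS w).2 (k + 1) < rowOf (RS w).2 (k + 1 + 1) ↔ w[k + 1] < w[k] := by
  rw [rowOf_RS_snd (by omega), rowOf_RS_snd hk, List.take_succ_eq_append_getElem (by omega),
    RS_append_singleton]
  exact newCellRow_lt_newCellRow_rowInsert_iff (rowsSorted_RS_fst _) _ _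

/-- If `(P, Q)` is the pair of tableaux produced from a word `w` by the Robinson–Schensted
algorithm, then `maj w = maj Q`. -/
theorem stmt18 (w : List ℕ) : majL w = majQ (RS w).2 w.length := by
  rw [majL, majQ]
  cases hn : w.length with
  | zero => rfl
  | succ m =>
    rw [Finset.sum_range_succ, if_neg (by omega), add_zero, Nat.add_sub_cancel,
      ← Finset.Ico_add_one_right_eq_Icc, Finset.sum_Ico_eq_sum_range, Nat.add_sub_cancel]
    refine Finset.sum_congr rfl fun i hi => ?_
    have hi : i + 1 < w.length := by rw [Finset.mem_range] at hi; omega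
    simp only [List.getD_eq_getElem _ _ hi, List.getD_eq_getElem _ _ (Nat.lt_of_succ_lt hi),
      add_comm 1 i, rowOf_RS_snd_lt_rowOf_RS_snd_iff hi, ← hn, hi, and_true]
end
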